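/- arXiv:math/0103097 — 2 statements merged into one kernel-verified Lean document; each statement's English description precedes it below -/
import Mathlib

section
/- Let σ be a set of r positive roots of A_r forming a basis of the hyperplane E_r = {a ∈ ℝ^{r+1} : Σ a_i = 0}, and let f_σ := 1/∏_{α∈σ} α be the corresponding simple fraction (each root e^i − e^j with j ≤ r acting as the linear form x_i − x_j, and e^i − e^{r+1} as x_i). If every vector e^k − e^{r+1} (1 ≤ k ≤ r) lies in the cone C(σ) of nonnegative linear combinations of the elements of σ, then Ires_{x=0} f_σ = 1; otherwise Ires_{x=0} f_σ = 0. (Equivalently, the Jeffrey–Kirwan linear form ⟨⟨c^+,·⟩⟩ attached to the nice chamber c^+ = {a : a_1 > 0, …, a_r > 0} coincides with the iterated residue Ires_{x=0} on S_{A_r}.) -/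
/-- The tower of rational function fields `ℚ ⊂ ℚ(x_1) ⊂ ℚ(x_1,x_2) ⊂ ⋯`, bundled with
its field structure. -/
noncomputable def RFpair : ℕ → ((K : Type) × Field K) := fun n =>
  Nat.rec ⟨ℚ, inferInstance⟩
    (fun _ p => letI : Field p.1 := p.2; ⟨RatFunc p.1, inferInstance⟩) n

/-- The field `ℚ(x_1, …, x_n)` of rational functions in `n` variables. -/
abbrev RF (n : ℕ) : Type := (RFpair n).1

noncomputable instance RFfield (n : ℕ) : Field (RF n) := (RFpair n).2

/-- The residue at `x_n = 0`: the coefficient of `x_n⁻¹` in the Laurent expansion at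
`x_n = 0` over the field `ℚ(x_1,…,x_{n-1})`. -/
noncomputable def resRF (n : ℕ) (f : RatFunc (RF n)) : RF n :=
  ((f : LaurentSeries (RF n))).coeff (-1)

/-- The iterated residue `Ires_{x=0} = Res_{x_1=0} Res_{x_2=0} ⋯ Res_{x_n=0}`. -/
noncomputable def Ires : (n : ℕ) → RF n → ℚ
  | 0, f => f
  | n+1, f => Ires n (resRF n f)

/-- The variable `x_i` (1-indexed, `1 ≤ i ≤ n`) as an element of `RF n`; `0` if `i` is out
of range (in particular `x_{n+1} = 0`). -/
noncomputable def Xv : (n : ℕ) → ℕ → RF n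
  | 0, _ => 0
  | n+1, i =>
    if i = n+1 then (RatFunc.X : RatFunc (RF n))
    else ((RatFunc.C (Xv n i) : RatFunc (RF n)) : RF (n+1))

/-- The positive root `e^{p.1} - e^{p.2}` (0-indexed) of `A_r` as a rational vector in
`ℚ^{r+1}`. -/
def rootVQ (r : ℕ) (p : Fin (r+1) × Fin (r+1)) : Fin (r+1) → ℚ :=
  fun k => if k = p.1 then 1 else if k = p.2 then -1 else 0

/-- The linear form on `V` attached to the root `e^{p.1} - e^{p.2}`, namely
`x_{p.1} - x_{p.2}` (1-indexed variables, with the convention `x_{r+1} = 0`). -/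
noncomputable def rootForm (r : ℕ) (p : Fin (r+1) × Fin (r+1)) : RF r :=
  Xv r ((p.1 : ℕ) + 1) - Xv r ((p.2 : ℕ) + 1)

/-!
The last simple root `e^r - e^{r+1}` is the form `x_r`, and every other positive root is, as a
function of `x_r`, either constant or `c - x_r` with `c ≠ 0`. So `Res_{x_r=0} f_σ` vanishes unless
that simple root lies in `σ`, and otherwise it is `f_{σ'}`, where `σ'` is the set of roots of
`A_{r-1}` obtained by merging the coordinates `r` and `r+1`. Merging is a linear map whose kernel is
spanned by the last simple root, so `σ'` is again linearly independent. It maps the cone of `σ` onto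
the cone of `σ'`; conversely a preimage of a target `e^k - e^r` differs from `e^k - e^{r+1}` by a
multiple of the last simple root, and the multiple is nonnegative because the `r`-th coordinate is
nonpositive on the cone of the other roots of `σ`. Induction on `r` concludes.
-/

open Polynomial

theorem RatFunc.X_ne_C {K : Type*} [Field K] (c : K) : (RatFunc.X : RatFunc K) ≠ RatFunc.C c :=
  fun h => by simpa using congrArg RatFunc.intDegree h

section Laurent

variable {K : Type*} [Field K]

theorem RatFunc.coe_inv_algebraMap {P : K[X]} (hP : P.eval 0 ≠ 0) :
    ((algebraMap K[X] (RatFunc K) P)⁻¹ : RatFunc K) =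
      HahnSeries.ofPowerSeries ℤ K (P : PowerSeries K)⁻¹ := by
  have hc : PowerSeries.constantCoeff (P : PowerSeries K) ≠ 0 := by
    rwa [Polynomial.constantCoeff_coe, Polynomial.coeff_zero_eq_eval_zero]
  rw [map_inv₀, ← RatFunc.coePolynomial_eq_algebraMap, ← RatFunc.coe_coe]
  refine inv_eq_of_mul_eq_one_right ?_
  rw [← map_mul, PowerSeries.mul_inv_cancel _ hc, map_one]

theorem RatFunc.coeff_coe_inv_algebraMap_neg_one {P : K[X]} (hP : P.eval 0 ≠ 0) :
    (((algebraMap K[X] (RatFunc K) P)⁻¹ : RatFunc K) : LaurentSeries K).coeff (-1) = 0 := by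
  rw [coe_inv_algebraMap hP, PowerSeries.coeff_coe]
  simp

theorem RatFunc.coeff_coe_inv_algebraMap_X_mul_neg_one {P : K[X]} (hP : P.eval 0 ≠ 0) :
    (((algebraMap K[X] (RatFunc K) (Polynomial.X * P))⁻¹ : RatFunc K) :
      LaurentSeries K).coeff (-1) = (P.eval 0)⁻¹ := by
  have hX : ((RatFunc.X⁻¹ : RatFunc K) : LaurentSeries K) = HahnSeries.single (-1) 1 := by
    rw [map_inv₀, RatFunc.coe_X]
    refine inv_eq_of_mul_eq_one_right ?_
    simp [HahnSeries.single_mul_single]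
  rw [map_mul, mul_inv, map_mul, RatFunc.algebraMap_X, coe_inv_algebraMap hP, hX]
  have := HahnSeries.coeff_single_mul_add (r := (1 : K))
      (x := HahnSeries.ofPowerSeries ℤ K (P : PowerSeries K)⁻¹) (a := 0) (b := -1)
  rw [zero_add] at this
  rw [this, one_mul, PowerSeries.coeff_coe]
  simp [Polynomial.coeff_zero_eq_eval_zero]

end Laurent

section Cone

variable {𝕜 : Type*} [Semiring 𝕜] [PartialOrder 𝕜] [IsOrderedRing 𝕜]

theorem exists_nonneg_sum_smul_eq_iff_mem_hull {ι E : Type*} [AddCommMonoid E] [Module 𝕜 E]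
    (s : Finset ι) (v : ι → E) (x : E) :
    (∃ c : ι → 𝕜, (∀ i, 0 ≤ c i) ∧ ∑ i ∈ s, c i • v i = x) ↔
      x ∈ PointedCone.hull 𝕜 (v '' s) := by
  rw [PointedCone.hull, Submodule.mem_span_image_finset_iff_exists_fun']
  constructor
  · rintro ⟨c, hc, rfl⟩
    exact ⟨fun i => ⟨c i, hc i⟩, rfl⟩
  · rintro ⟨c, rfl⟩
    exact ⟨fun i => c i, fun i => (c i).2, rfl⟩

theorem apply_nonpos_of_mem_hull {ι : Type*} {s : Set (ι → 𝕜)} {i : ι}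
    (hs : ∀ v ∈ s, v i ≤ 0) {x : ι → 𝕜} (hx : x ∈ PointedCone.hull 𝕜 s) : x i ≤ 0 := by
  induction hx using Submodule.span_induction with
  | mem v hv => exact hs v hv
  | zero => rfl
  | add x y _ _ hx hy => simpa using add_nonpos hx hy
  | smul c x _ hx =>
    rw [Pi.smul_apply, ← Nonneg.coe_smul, smul_eq_mul]
    exact mul_nonpos_of_nonneg_of_nonpos c.2 hx

theorem PointedCone.map_hull {E F : Type*} [AddCommMonoid E] [Module 𝕜 E] [AddCommMonoid F]
    [Module 𝕜 F] (f : E →ₗ[𝕜] F) (s : Set E) :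
    (PointedCone.hull 𝕜 s).map f = PointedCone.hull 𝕜 (f '' s) :=
  Submodule.map_span _ _

end Cone

/-- `RF (n+1)` is `RatFunc (RF n)` by definition; this equivalence lets rewriting use the
`RatFunc` structure. -/
noncomputable def RF.succEquiv (n : ℕ) : RF (n+1) ≃+* RatFunc (RF n) := RingEquiv.refl _

theorem Ires_succ (n : ℕ) (f : RF (n+1)) :
    Ires (n+1) f = Ires n (resRF n (RF.succEquiv n f)) := rfl

theorem Ires_zero_right (n : ℕ) : Ires n 0 = 0 := by
  induction n with
  | zero => rfl
  | succ n ih => rw [Ires_succ, map_zero, resRF, map_zero, HahnSeries.coeff_zero, ih]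

theorem succEquiv_Xv (n i : ℕ) :
    RF.succEquiv n (Xv (n+1) i) = if i = n+1 then RatFunc.X else RatFunc.C (Xv n i) := rfl

theorem Xv_eq_zero_of_lt {n i : ℕ} (h : n < i) : Xv n i = 0 := by
  induction n with
  | zero => rfl
  | succ n ih =>
    apply (RF.succEquiv n).injective
    rw [succEquiv_Xv, if_neg (by omega), ih (by omega), map_zero, map_zero]

theorem Xv_ne_zero {n i : ℕ} (h1 : 1 ≤ i) (h2 : i ≤ n) : Xv n i ≠ 0 := by
  induction n with
  | zero => omega
  | succ n ih =>
    rw [← (RF.succEquiv n).map_ne_zero_iff, succEquiv_Xv]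
    split_ifs
    · exact RatFunc.X_ne_zero
    · exact (_root_.map_ne_zero RatFunc.C).2 (ih (by omega))

theorem Xv_injOn (n : ℕ) : Set.InjOn (Xv n) (Set.Icc 1 n) := by
  induction n with
  | zero =>
    intro i hi j hj _
    simp only [Set.mem_Icc] at hi hj
    omega
  | succ n ih =>
    intro i hi j hj hij
    simp only [Set.mem_Icc] at hi hj
    replace hij := congrArg (RF.succEquiv n) hij
    rw [succEquiv_Xv, succEquiv_Xv] at hij
    split_ifs at hij
    · omega
    · exact absurd hij (RatFunc.X_ne_C _)
    · exact absurd hij.symm (RatFunc.X_ne_C _)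
    · exact ih ⟨hi.1, by omega⟩ ⟨hj.1, by omega⟩ (RatFunc.C_injective hij)

theorem rootForm_ne_zero {r : ℕ} {p : Fin (r+1) × Fin (r+1)} (h : p.1 < p.2) :
    rootForm r p ≠ 0 := by
  have h1 : (p.1 : ℕ) < p.2 := h
  have h2 := p.2.isLt
  rw [rootForm, sub_ne_zero]
  intro hp
  rcases (Nat.lt_succ_iff.1 h2).lt_or_eq with h2 | h2
  · have := Xv_injOn r ⟨by omega, by omega⟩ ⟨by omega, by omega⟩ hp
    omega
  · rw [h2, Xv_eq_zero_of_lt (Nat.lt_succ_self r)] at hp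
    exact Xv_ne_zero (by omega) (by omega) hp

def mergeLast (n : ℕ) (i : Fin (n+2)) : Fin (n+1) := ⟨min (i : ℕ) n, by omega⟩

@[simp] theorem val_mergeLast (n : ℕ) (i : Fin (n+2)) : (mergeLast n i : ℕ) = min (i : ℕ) n := rfl

abbrev contractRoot (n : ℕ) : Fin (n+2) × Fin (n+2) → Fin (n+1) × Fin (n+1) :=
  Prod.map (mergeLast n) (mergeLast n)

def lastSimpleRoot (n : ℕ) : Fin (n+2) × Fin (n+2) := ((Fin.last n).castSucc, Fin.last (n+1))

theorem fst_lt_of_ne_lastSimpleRoot {n : ℕ} {p : Fin (n+2) × Fin (n+2)} (hp : p.1 < p.2)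
    (he : p ≠ lastSimpleRoot n) : (p.1 : ℕ) < n := by
  have hp' : (p.1 : ℕ) < p.2 := hp
  have := p.2.isLt
  by_contra h
  exact he (Prod.ext (Fin.ext (by simp [lastSimpleRoot]; omega))
    (Fin.ext (by simp [lastSimpleRoot]; omega)))

theorem contractRoot_lt {n : ℕ} {p : Fin (n+2) × Fin (n+2)} (hp : p.1 < p.2)
    (he : p ≠ lastSimpleRoot n) : (contractRoot n p).1 < (contractRoot n p).2 := by
  have := fst_lt_of_ne_lastSimpleRoot hp he
  have hp' : (p.1 : ℕ) < p.2 := hp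
  show min (p.1 : ℕ) n < min (p.2 : ℕ) n
  omega

theorem succEquiv_Xv_succ (n : ℕ) (i : Fin (n+2)) :
    RF.succEquiv n (Xv (n+1) (i+1)) =
      RatFunc.C (Xv n (mergeLast n i + 1)) + if (i : ℕ) = n then RatFunc.X else 0 := by
  have hi := i.isLt
  rw [succEquiv_Xv, val_mergeLast]
  by_cases h : (i : ℕ) = n
  · rw [if_pos (by omega), if_pos h, min_eq_right h.ge, Xv_eq_zero_of_lt (Nat.lt_succ_self n),
      map_zero, zero_add]
  · rw [if_neg (by omega), if_neg h, add_zero]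
    rcases (show (i : ℕ) < n ∨ (i : ℕ) = n + 1 by omega) with h' | h'
    · rw [min_eq_left h'.le]
    · rw [h', min_eq_right (by omega), Xv_eq_zero_of_lt (show n < n + 1 + 1 by omega),
        Xv_eq_zero_of_lt (Nat.lt_succ_self n)]

/-- `rootForm (n+1) p` as a polynomial in `x_{n+1}` over `ℚ(x_1, …, x_n)`. -/
noncomputable def rootPoly (n : ℕ) (p : Fin (n+2) × Fin (n+2)) : (RF n)[X] :=
  C (rootForm n (contractRoot n p)) + (if (p.1 : ℕ) = n then X else 0) -
    if (p.2 : ℕ) = n then X else 0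

theorem algebraMap_rootPoly (n : ℕ) (p : Fin (n+2) × Fin (n+2)) :
    algebraMap (RF n)[X] (RatFunc (RF n)) (rootPoly n p) = RF.succEquiv n (rootForm (n+1) p) := by
  rw [rootForm, map_sub, succEquiv_Xv_succ, succEquiv_Xv_succ, rootPoly, rootForm]
  split_ifs <;> simp <;> ring

theorem rootPoly_eval_zero (n : ℕ) (p : Fin (n+2) × Fin (n+2)) :
    (rootPoly n p).eval 0 = rootForm n (contractRoot n p) := by
  rw [rootPoly]
  split_ifs <;> simp

theorem rootPoly_lastSimpleRoot (n : ℕ) : rootPoly n (lastSimpleRoot n) = X := by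
  simp [rootPoly, lastSimpleRoot, rootForm]

theorem eval_zero_prod_rootPoly_ne_zero {n : ℕ} {s : Finset (Fin (n+2) × Fin (n+2))}
    (hpos : ∀ p ∈ s, p.1 < p.2) (he : lastSimpleRoot n ∉ s) :
    (∏ p ∈ s, rootPoly n p).eval 0 ≠ 0 := by
  rw [eval_prod, Finset.prod_ne_zero_iff]
  intro p hp
  rw [rootPoly_eval_zero]
  exact rootForm_ne_zero (contractRoot_lt (hpos p hp) (ne_of_mem_of_not_mem hp he))

theorem resRF_inv_prod_rootForm (n : ℕ) (σ : Finset (Fin (n+2) × Fin (n+2)))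
    (hpos : ∀ p ∈ σ, p.1 < p.2) :
    resRF n (RF.succEquiv n (∏ p ∈ σ, rootForm (n+1) p)⁻¹) =
      if lastSimpleRoot n ∈ σ then
        (∏ p ∈ σ.erase (lastSimpleRoot n), rootForm n (contractRoot n p))⁻¹
      else 0 := by
  simp_rw [map_inv₀, map_prod, ← algebraMap_rootPoly, ← map_prod, resRF]
  split_ifs with he
  · rw [← Finset.mul_prod_erase σ _ he, rootPoly_lastSimpleRoot,
      RatFunc.coeff_coe_inv_algebraMap_X_mul_neg_one (eval_zero_prod_rootPoly_ne_zero
        (fun p hp => hpos p (Finset.mem_of_mem_erase hp)) (Finset.notMem_erase _ σ)), eval_prod]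
    simp_rw [rootPoly_eval_zero]
  · exact RatFunc.coeff_coe_inv_algebraMap_neg_one (eval_zero_prod_rootPoly_ne_zero hpos he)

noncomputable def mergeLastLinear (n : ℕ) : (Fin (n+2) → ℚ) →ₗ[ℚ] (Fin (n+1) → ℚ) where
  toFun a j := a j.castSucc + if j = Fin.last n then a (Fin.last (n+1)) else 0
  map_add' a b := by
    funext j
    simp only [Pi.add_apply]
    split_ifs <;> ring
  map_smul' c a := by
    funext j
    simp only [Pi.smul_apply, smul_eq_mul, RingHom.id_apply]
    split_ifs <;> ring

theorem mergeLastLinear_single (n : ℕ) (i : Fin (n+2)) (c : ℚ) :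
    mergeLastLinear n (Pi.single i c) = Pi.single (mergeLast n i) c := by
  funext j
  simp only [mergeLastLinear, LinearMap.coe_mk, AddHom.coe_mk, Pi.single_apply, Fin.ext_iff,
    Fin.val_castSucc, Fin.val_last, val_mergeLast]
  have := i.isLt
  have := j.isLt
  split_ifs <;> first | omega | simp

theorem rootVQ_eq_single_sub_single {r : ℕ} {p : Fin (r+1) × Fin (r+1)} (h : p.1 ≠ p.2) :
    rootVQ r p = Pi.single p.1 1 - Pi.single p.2 1 := by
  funext k
  simp only [rootVQ, Pi.sub_apply, Pi.single_apply]
  split_ifs <;> simp_all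

theorem mergeLastLinear_rootVQ {n : ℕ} {p : Fin (n+2) × Fin (n+2)}
    (h : mergeLast n p.1 ≠ mergeLast n p.2) :
    mergeLastLinear n (rootVQ (n+1) p) = rootVQ n (contractRoot n p) := by
  rw [rootVQ_eq_single_sub_single (fun h' => h (congrArg _ h')), rootVQ_eq_single_sub_single h,
    map_sub, mergeLastLinear_single, mergeLastLinear_single]
  rfl

theorem mergeLastLinear_rootVQ_lastSimpleRoot (n : ℕ) :
    mergeLastLinear n (rootVQ (n+1) (lastSimpleRoot n)) = 0 := by
  rw [rootVQ_eq_single_sub_single (by simp [lastSimpleRoot, Fin.ext_iff]), map_sub,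
    mergeLastLinear_single, mergeLastLinear_single, sub_eq_zero]
  congr 1
  ext
  simp [lastSimpleRoot]

theorem ker_mergeLastLinear (n : ℕ) :
    LinearMap.ker (mergeLastLinear n) = Submodule.span ℚ {rootVQ (n+1) (lastSimpleRoot n)} := by
  refine le_antisymm (fun a ha => ?_) ((Submodule.span_singleton_le_iff_mem _ _).2
    (mergeLastLinear_rootVQ_lastSimpleRoot n))
  have key (j : Fin (n+1)) :
      a j.castSucc + (if j = Fin.last n then a (Fin.last (n+1)) else 0) = 0 :=
    congrFun ha j
  refine Submodule.mem_span_singleton.2 ⟨a (Fin.last n).castSucc, funext fun i => ?_⟩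
  induction i using Fin.lastCases with
  | last =>
    have := key (Fin.last n)
    simp [rootVQ, lastSimpleRoot, Fin.ext_iff] at this ⊢
    linarith
  | cast j =>
    by_cases hj : j = Fin.last n
    · subst hj
      simp [rootVQ, lastSimpleRoot]
    · have hj' : (j : ℕ) ≠ n := fun h => hj (Fin.ext h)
      have hzero : a j.castSucc = 0 := by simpa [hj] using key j
      have hj'' : (j : ℕ) ≠ n + 1 := j.isLt.ne
      simp [rootVQ, lastSimpleRoot, Fin.ext_iff, hj', hj'', hzero]

def LastRootsInCone (r : ℕ) (σ : Finset (Fin (r+1) × Fin (r+1))) : Prop :=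
  ∀ k : Fin r, rootVQ r (k.castSucc, Fin.last r) ∈ PointedCone.hull ℚ (rootVQ r '' σ)

def contractRoots (n : ℕ) (σ : Finset (Fin (n+2) × Fin (n+2))) : Finset (Fin (n+1) × Fin (n+1)) :=
  (σ.erase (lastSimpleRoot n)).image (contractRoot n)

theorem contractRoot_castSucc_last (n : ℕ) (k : Fin n) :
    contractRoot n (k.castSucc.castSucc, Fin.last (n+1)) = (k.castSucc, Fin.last n) := by
  ext <;> simp [k.isLt.le]

theorem mergeLastLinear_rootVQ_castSucc_last (n : ℕ) (k : Fin n) :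
    mergeLastLinear n (rootVQ (n+1) (k.castSucc.castSucc, Fin.last (n+1))) =
      rootVQ n (k.castSucc, Fin.last n) := by
  rw [mergeLastLinear_rootVQ, contractRoot_castSucc_last]
  simp [Fin.ext_iff, k.isLt.le, k.isLt.ne]

theorem apply_lastSimpleRoot_fst_nonpos_of_mem_hull {n : ℕ} {S : Set (Fin (n+2) × Fin (n+2))}
    (hS : ∀ p ∈ S, p.1 < p.2 ∧ p ≠ lastSimpleRoot n) {x : Fin (n+2) → ℚ}
    (hx : x ∈ PointedCone.hull ℚ (rootVQ (n+1) '' S)) : x (lastSimpleRoot n).1 ≤ 0 := by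
  refine apply_nonpos_of_mem_hull ?_ hx
  rintro _ ⟨p, hp, rfl⟩
  have := fst_lt_of_ne_lastSimpleRoot (hS p hp).1 (hS p hp).2
  simp only [rootVQ, lastSimpleRoot, Fin.ext_iff, Fin.val_castSucc, Fin.val_last]
  split_ifs <;> first | omega | norm_num

theorem not_lastRootsInCone {n : ℕ} {σ : Finset (Fin (n+2) × Fin (n+2))}
    (hpos : ∀ p ∈ σ, p.1 < p.2) (he : lastSimpleRoot n ∉ σ) : ¬ LastRootsInCone (n+1) σ := by
  intro hc
  have := apply_lastSimpleRoot_fst_nonpos_of_mem_hull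
    (fun p hp => ⟨hpos p hp, ne_of_mem_of_not_mem hp he⟩) (hc (Fin.last n))
  norm_num [rootVQ, lastSimpleRoot] at this

theorem mem_hull_insert_of_mergeLastLinear_mem {n : ℕ} {S : Set (Fin (n+2) × Fin (n+2))}
    (hS : ∀ p ∈ S, p.1 < p.2 ∧ p ≠ lastSimpleRoot n) {t : Fin (n+2) → ℚ}
    (ht : t (lastSimpleRoot n).1 = 0)
    (hmap : mergeLastLinear n t ∈
      (PointedCone.hull ℚ (rootVQ (n+1) '' S)).map (mergeLastLinear n)) :
    t ∈ PointedCone.hull ℚ (rootVQ (n+1) '' insert (lastSimpleRoot n) S) := by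
  obtain ⟨y, hy, hyt⟩ := hmap
  have hker : t - y ∈ LinearMap.ker (mergeLastLinear n) := by
    have hyt : mergeLastLinear n y = mergeLastLinear n t := hyt
    rw [LinearMap.mem_ker, map_sub, hyt, sub_self]
  obtain ⟨c, hc⟩ := Submodule.mem_span_singleton.1 (ker_mergeLastLinear n ▸ hker)
  have hc0 : 0 ≤ c := by
    have hcoord := congrFun hc (lastSimpleRoot n).1
    have hy0 := apply_lastSimpleRoot_fst_nonpos_of_mem_hull hS hy
    simp [rootVQ, lastSimpleRoot] at hcoord hy0 ht
    linarith
  have hty : t = y + (⟨c, hc0⟩ : {c : ℚ // 0 ≤ c}) • rootVQ (n+1) (lastSimpleRoot n) := by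
    rw [Nonneg.mk_smul, hc]
    abel
  rw [hty, Set.image_insert_eq]
  exact add_mem (Submodule.span_mono (Set.subset_insert _ _) hy)
    (Submodule.smul_mem _ _ (PointedCone.subset_hull (Set.mem_insert _ _)))

theorem image_rootVQ_contractRoots {n : ℕ} {σ : Finset (Fin (n+2) × Fin (n+2))}
    (hpos : ∀ p ∈ σ, p.1 < p.2) :
    rootVQ n '' ↑(contractRoots n σ) =
      mergeLastLinear n '' (rootVQ (n+1) '' ↑(σ.erase (lastSimpleRoot n))) := by
  rw [contractRoots, Finset.coe_image, Set.image_image, Set.image_image]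
  refine Set.image_congr fun p hp => ?_
  obtain ⟨hne, hp⟩ := Finset.mem_erase.1 hp
  exact (mergeLastLinear_rootVQ (contractRoot_lt (hpos p hp) hne).ne).symm

theorem lastRootsInCone_succ_iff {n : ℕ} {σ : Finset (Fin (n+2) × Fin (n+2))}
    (hpos : ∀ p ∈ σ, p.1 < p.2) (he : lastSimpleRoot n ∈ σ) :
    LastRootsInCone (n+1) σ ↔ LastRootsInCone n (contractRoots n σ) := by
  set S := σ.erase (lastSimpleRoot n)
  have hσ : (σ : Set _) = insert (lastSimpleRoot n) ↑S := by
    rw [Finset.coe_erase, Set.insert_sdiff_singleton, Set.insert_eq_of_mem he]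
  unfold LastRootsInCone
  rw [image_rootVQ_contractRoots hpos, ← PointedCone.map_hull]
  constructor
  · intro hc k
    have hle : (PointedCone.hull ℚ (rootVQ (n+1) '' σ)).map (mergeLastLinear n) ≤
        (PointedCone.hull ℚ (rootVQ (n+1) '' S)).map (mergeLastLinear n) := by
      rw [PointedCone.map_hull, PointedCone.map_hull, hσ, Set.image_insert_eq,
        Set.image_insert_eq, mergeLastLinear_rootVQ_lastSimpleRoot]
      exact Submodule.span_le.2 (Set.insert_subset (zero_mem _) Submodule.subset_span)
    rw [← mergeLastLinear_rootVQ_castSucc_last]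
    exact hle ⟨_, hc k.castSucc, rfl⟩
  · intro hc k
    induction k using Fin.lastCases with
    | last => exact PointedCone.subset_hull (Set.mem_image_of_mem _ he)
    | cast k =>
      rw [hσ]
      refine mem_hull_insert_of_mergeLastLinear_mem (fun p hp => ?_) ?_ ?_
      · obtain ⟨hne, hp⟩ := Finset.mem_erase.1 hp
        exact ⟨hpos p hp, hne⟩
      · simp [rootVQ, lastSimpleRoot, Fin.ext_iff, k.isLt.ne']
      · rw [mergeLastLinear_rootVQ_castSucc_last]
        exact hc k

section Contraction

variable {n : ℕ} {σ : Finset (Fin (n+2) × Fin (n+2))}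

theorem linearIndepOn_rootVQ_comp_contractRoot (hpos : ∀ p ∈ σ, p.1 < p.2)
    (he : lastSimpleRoot n ∈ σ) (hind : LinearIndepOn ℚ (rootVQ (n+1)) ↑σ) :
    LinearIndepOn ℚ (rootVQ n ∘ contractRoot n) ↑(σ.erase (lastSimpleRoot n)) := by
  have hσ : (σ : Set _) = {lastSimpleRoot n} ∪ ↑(σ.erase (lastSimpleRoot n)) := by
    rw [Finset.coe_erase, Set.singleton_union, Set.insert_sdiff_singleton, Set.insert_eq_of_mem he]
  rw [hσ, linearIndepOn_union_iff (Set.disjoint_singleton_left.2 (Finset.notMem_erase _ _)),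
    Set.image_singleton, ← ker_mergeLastLinear] at hind
  obtain ⟨-, hS, hdisj⟩ := hind
  refine LinearIndepOn.congr (v := mergeLastLinear n ∘ rootVQ (n+1)) (hS.map ?_) fun p hp => ?_
  · rw [← Set.image_eq_range]
    exact hdisj.symm
  · obtain ⟨hne, hp⟩ := Finset.mem_erase.1 hp
    exact mergeLastLinear_rootVQ (contractRoot_lt (hpos p hp) hne).ne

theorem injOn_contractRoot (hpos : ∀ p ∈ σ, p.1 < p.2)
    (he : lastSimpleRoot n ∈ σ) (hind : LinearIndepOn ℚ (rootVQ (n+1)) ↑σ) :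
    Set.InjOn (contractRoot n) ↑(σ.erase (lastSimpleRoot n)) :=
  (linearIndepOn_rootVQ_comp_contractRoot hpos he hind).injOn.of_comp

theorem linearIndepOn_contractRoots (hpos : ∀ p ∈ σ, p.1 < p.2)
    (he : lastSimpleRoot n ∈ σ) (hind : LinearIndepOn ℚ (rootVQ (n+1)) ↑σ) :
    LinearIndepOn ℚ (rootVQ n) ↑(contractRoots n σ) := by
  rw [contractRoots, Finset.coe_image]
  exact (linearIndepOn_rootVQ_comp_contractRoot hpos he hind).image_of_comp _ _

theorem contractRoots_pos (hpos : ∀ p ∈ σ, p.1 < p.2) :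
    ∀ u ∈ contractRoots n σ, u.1 < u.2 := by
  simp only [contractRoots, Finset.mem_image, Finset.mem_erase]
  rintro _ ⟨p, ⟨hne, hp⟩, rfl⟩
  exact contractRoot_lt (hpos p hp) hne

end Contraction

open scoped Classical in
theorem Ires_inv_prod_rootForm (r : ℕ) (σ : Finset (Fin (r+1) × Fin (r+1)))
    (hpos : ∀ p ∈ σ, p.1 < p.2) (hind : LinearIndepOn ℚ (rootVQ r) ↑σ) :
    Ires r (∏ p ∈ σ, rootForm r p)⁻¹ = if LastRootsInCone r σ then 1 else 0 := by
  induction r with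
  | zero =>
    obtain rfl : σ = ∅ :=
      Finset.eq_empty_of_forall_notMem fun p hp => by have := hpos p hp; omega
    rw [if_pos (show LastRootsInCone 0 ∅ from fun k => k.elim0), Finset.prod_empty, inv_one]
    rfl
  | succ n ih =>
    rw [Ires_succ, resRF_inv_prod_rootForm n σ hpos]
    by_cases he : lastSimpleRoot n ∈ σ
    · rw [if_pos he, ← Finset.prod_image (injOn_contractRoot hpos he hind)]
      refine (ih _ (contractRoots_pos hpos) (linearIndepOn_contractRoots hpos he hind)).trans ?_
      simp only [lastRootsInCone_succ_iff hpos he]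
    · rw [if_neg he, Ires_zero_right, if_neg (not_lastRootsInCone hpos he)]

theorem stmt1_general (r : ℕ) (σ : Finset (Fin (r+1) × Fin (r+1)))
    (hpos : ∀ p ∈ σ, p.1 < p.2)
    (hindep : LinearIndependent ℚ (fun p : {x // x ∈ σ} => rootVQ r p.1)) :
    ((∀ k : Fin r, ∃ c : Fin (r+1) × Fin (r+1) → ℚ, (∀ p, 0 ≤ c p) ∧
        (∑ p ∈ σ, c p • rootVQ r p) = rootVQ r (k.castSucc, Fin.last r)) →
      Ires r (∏ p ∈ σ, rootForm r p)⁻¹ = 1) ∧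
    ((¬ ∀ k : Fin r, ∃ c : Fin (r+1) × Fin (r+1) → ℚ, (∀ p, 0 ≤ c p) ∧
        (∑ p ∈ σ, c p • rootVQ r p) = rootVQ r (k.castSucc, Fin.last r)) →
      Ires r (∏ p ∈ σ, rootForm r p)⁻¹ = 0) := by
  have hcone : (∀ k : Fin r, ∃ c : Fin (r+1) × Fin (r+1) → ℚ, (∀ p, 0 ≤ c p) ∧
      (∑ p ∈ σ, c p • rootVQ r p) = rootVQ r (k.castSucc, Fin.last r)) ↔ LastRootsInCone r σ :=
    forall_congr' fun k => exists_nonneg_sum_smul_eq_iff_mem_hull σ (rootVQ r) _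
  rw [hcone, Ires_inv_prod_rootForm r σ hpos hindep]
  exact ⟨fun h => if_pos h, fun h => if_neg h⟩

/-- let `σ` be a set of `r` positive roots of `A_r` forming a basis of
`E_r`, and let `f_σ = 1/∏_{α ∈ σ} α`.  If every `e^k - e^{r+1}` (`1 ≤ k ≤ r`) lies in the
cone generated by `σ`, then `Ires_{x=0} f_σ = 1`; otherwise `Ires_{x=0} f_σ = 0`. -/
theorem stmt1 (r : ℕ) (σ : Finset (Fin (r+1) × Fin (r+1)))
    (hpos : ∀ p ∈ σ, p.1 < p.2) (hcard : σ.card = r)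
    (hindep : LinearIndependent ℚ (fun p : {x // x ∈ σ} => rootVQ r p.1)) :
    ((∀ k : Fin r, ∃ c : Fin (r+1) × Fin (r+1) → ℚ, (∀ p, 0 ≤ c p) ∧
        (∑ p ∈ σ, c p • rootVQ r p) = rootVQ r (k.castSucc, Fin.last r)) →
      Ires r (∏ p ∈ σ, rootForm r p)⁻¹ = 1) ∧
    ((¬ ∀ k : Fin r, ∃ c : Fin (r+1) × Fin (r+1) → ℚ, (∀ p, 0 ≤ c p) ∧
        (∑ p ∈ σ, c p • rootVQ r p) = rootVQ r (k.castSucc, Fin.last r)) →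
      Ires r (∏ p ∈ σ, rootForm r p)⁻¹ = 0) :=
  stmt1_general r σ hpos hindep
end

section
/- (Conjecture 4 of Chan–Robbins–Yuen) Let n ≥ 3, d = n(n−1)/2, and let F := {X ∈ CRY_n : x_{22} = 0}, a codimension-one face of CRY_n. Then binom(n,2)·(d−1)!·lim_{t→∞} |{X ∈ ℤ^{n×n} : X ∈ t·F}|/t^{d−1} = 3·d!·lim_{t→∞} |{X ∈ ℤ^{n×n} : X ∈ t·CRY_n}|/t^d; that is, binom(n,2) times the relative volume of the face F equals 3 times the relative volume of CRY_n. -/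
open scoped Pointwise

/-- The Chan–Robbins–Yuen polytope: `n × n` real matrices with nonnegative entries, all
row and column sums equal to `1`, and vanishing entries `x_{ij} = 0` for `j ≥ i + 2`. -/
def CRY (n : ℕ) : Set (Matrix (Fin n) (Fin n) ℝ) :=
  {X | (∀ i j, 0 ≤ X i j) ∧ (∀ i, ∑ j, X i j = 1) ∧ (∀ j, ∑ i, X i j = 1) ∧
    ∀ i j : Fin n, (i : ℕ) + 2 ≤ (j : ℕ) → X i j = 0}

/-- The codimension-one face `F = {X ∈ CRY_n : x_{22} = 0}` (1-based entry `(2,2)`). -/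
def CRYface (n : ℕ) (h : 2 ≤ n) : Set (Matrix (Fin n) (Fin n) ℝ) :=
  {X | X ∈ CRY n ∧ X ⟨1, h⟩ ⟨1, h⟩ = 0}

/-- The number of integer matrices lying in the dilate `t · P` of a set of real
matrices. -/
noncomputable def latCount (n : ℕ) (P : Set (Matrix (Fin n) (Fin n) ℝ)) (t : ℕ) : ℕ :=
  Nat.card {X : Matrix (Fin n) (Fin n) ℤ // (fun i j => (X i j : ℝ)) ∈ (t : ℝ) • P}


open Matrix Finset Filter Topology

/-! Write `T` for the integer points of `t • CRY_n` and `F` for those of its face `x₁₁ = 0`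
(indices 0-based). Subtracting `x₁₁` times the circuit `E₀₀ + E₁₁ - E₀₁ - E₁₀` maps `T` onto `F`,
and the fibre over `Y` has `Y₁₀ + 1` points, so `|T| = |F| + ∑_F Y₁₀`. On `F` the statistics
`Y₀₀`, `Y₁₀` and `Y₁₂ - Y₀₀` are equidistributed: swapping rows 0, 1 and columns 1, 2 exchanges
the first two, and swapping columns 0, 2 followed by a circuit correction exchanges the last two.
They add up to the sum `t` of row 1, hence `3 |T| = (t + 3) |F|`, and comparing growth rates in `t`
gives `d · vol F = 3 · vol CRY_n`. -/

section Circuit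

variable {ι R : Type*} [DecidableEq ι] [CommRing R]

/-- `E_ac + E_bd - E_ad - E_bc`. -/
def circuit (a b c d : ι) : Matrix ι ι R :=
  vecMulVec (Pi.single a 1 - Pi.single b 1) (Pi.single c 1 - Pi.single d 1)

lemma sum_single_sub_single [Fintype ι] (a b : ι) :
    ∑ k, (Pi.single a 1 - Pi.single b 1 : ι → R) k = 0 := by
  simp [Finset.sum_sub_distrib]

lemma add_smul_circuit_apply (X : Matrix ι ι R) (s : R) (a b c d i j : ι) :
    (X + s • circuit a b c d : Matrix ι ι R) i j =
      X i j + s * ((Pi.single a 1 - Pi.single b 1 : ι → R) i *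
        (Pi.single c 1 - Pi.single d 1 : ι → R) j) :=
  rfl

lemma sum_add_smul_circuit_row [Fintype ι] (X : Matrix ι ι R) (s : R) (a b c d i : ι) :
    ∑ j, (X + s • circuit a b c d : Matrix ι ι R) i j = ∑ j, X i j := by
  simp only [circuit, Matrix.add_apply, Matrix.smul_apply, vecMulVec_apply, smul_eq_mul,
    sum_add_distrib, ← mul_sum, sum_single_sub_single, mul_zero, add_zero]

lemma sum_add_smul_circuit_col [Fintype ι] (X : Matrix ι ι R) (s : R) (a b c d j : ι) :
    ∑ i, (X + s • circuit a b c d : Matrix ι ι R) i j = ∑ i, X i j := by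
  simp only [circuit, Matrix.add_apply, Matrix.smul_apply, vecMulVec_apply, smul_eq_mul,
    sum_add_distrib, mul_left_comm s, mul_comm _ ((Pi.single c 1 - Pi.single d 1 : ι → R) j),
    ← mul_sum, sum_single_sub_single, mul_zero, add_zero]

lemma circuit_submatrix_swap (a b c d : ι) :
    (circuit a b c d : Matrix ι ι R).submatrix id (Equiv.swap c d) = -circuit a b c d := by
  ext i j
  simp only [circuit, submatrix_apply, id, vecMulVec_apply, Matrix.neg_apply, Pi.sub_apply,
    Pi.single_apply, Equiv.swap_apply_def]
  split_ifs <;> simp_all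

variable {a b c d : ι}

lemma circuit_apply_of_ne_left {i : ι} (ha : i ≠ a) (hb : i ≠ b) (j : ι) :
    circuit a b c d i j = (0 : R) := by
  simp [circuit, vecMulVec_apply, ha, hb]

lemma circuit_apply_of_ne_right {j : ι} (hc : j ≠ c) (hd : j ≠ d) (i : ι) :
    circuit a b c d i j = (0 : R) := by
  simp [circuit, vecMulVec_apply, hc, hd]

lemma nonneg_add_smul_circuit [PartialOrder R] [IsOrderedRing R] {X : Matrix ι ι R}
    (hX : ∀ i j, 0 ≤ X i j) (hab : a ≠ b) (hcd : c ≠ d) {s : R}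
    (hac : 0 ≤ X a c + s) (had : s ≤ X a d) (hbc : s ≤ X b c) (hbd : 0 ≤ X b d + s) (i j : ι) :
    0 ≤ (X + s • circuit a b c d : Matrix ι ι R) i j := by
  by_cases hi : i = a ∨ i = b
  · by_cases hj : j = c ∨ j = d
    · rcases hi with rfl | rfl <;> rcases hj with rfl | rfl <;>
        simp [circuit, vecMulVec_apply, hab, hab.symm, hcd, hcd.symm] <;> assumption
    · push Not at hj
      simpa [circuit_apply_of_ne_right hj.1 hj.2] using hX i j
  · push Not at hi
    simpa [circuit_apply_of_ne_left hi.1 hi.2] using hX i j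

end Circuit

lemma mul_eq_mul_of_tendsto_of_mul_eq {a b : ℕ → ℕ} {k d : ℕ} {L₁ L₂ : ℝ} (hk : k ≠ 0)
    (hd : d ≠ 0) (hab : ∀ t, t ≠ 0 → k * a t = (t + k) * b t)
    (hb : Tendsto (fun t : ℕ => (((d - 1).factorial * b t : ℕ) : ℝ) / (t : ℝ) ^ (d - 1))
      atTop (𝓝 L₁))
    (ha : Tendsto (fun t : ℕ => ((d.factorial * a t : ℕ) : ℝ) / (t : ℝ) ^ d) atTop (𝓝 L₂)) :
    d * L₁ = k * L₂ := by
  have hk' : (k : ℝ) ≠ 0 := by exact_mod_cast hk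
  have hratio : Tendsto (fun t : ℕ => 1 + k / (t : ℝ)) atTop (𝓝 1) := by
    simpa using tendsto_const_nhds.add (tendsto_const_div_atTop_nhds_zero_nat (k : ℝ))
  have heq : (fun t : ℕ => (d / k : ℝ) * (1 + k / (t : ℝ)) *
      ((((d - 1).factorial * b t : ℕ) : ℝ) / (t : ℝ) ^ (d - 1))) =ᶠ[atTop]
      fun t : ℕ => ((d.factorial * a t : ℕ) : ℝ) / (t : ℝ) ^ d := by
    filter_upwards [eventually_ne_atTop 0] with t ht
    have hab' : (k : ℝ) * a t = (t + k) * b t := by exact_mod_cast hab t ht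
    obtain ⟨e, rfl⟩ := Nat.exists_eq_add_one_of_ne_zero hd
    have ht' : (t : ℝ) ≠ 0 := by exact_mod_cast ht
    push_cast
    rw [Nat.factorial_succ, pow_succ]
    push_cast
    field_simp
    linear_combination -hab'
  have hL₂ := tendsto_nhds_unique ha (((tendsto_const_nhds.mul hratio).mul hb).congr' heq)
  rw [hL₂]
  field_simp

namespace ChanRobbinsYuen

variable {n : ℕ}

structure IsCRYPoint (t : ℤ) (X : Matrix (Fin n) (Fin n) ℤ) : Prop where
  nonneg : ∀ i j, 0 ≤ X i j
  row_sum : ∀ i, ∑ j, X i j = t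
  col_sum : ∀ j, ∑ i, X i j = t
  eq_zero : ∀ i j : Fin n, (i : ℕ) + 2 ≤ j → X i j = 0

lemma IsCRYPoint.le {t : ℤ} {X : Matrix (Fin n) (Fin n) ℤ} (hX : IsCRYPoint t X) (i j : Fin n) :
    X i j ≤ t :=
  hX.row_sum i ▸ single_le_sum (fun k _ => hX.nonneg i k) (mem_univ j)

lemma finite_isCRYPoint (t : ℤ) : {X : Matrix (Fin n) (Fin n) ℤ | IsCRYPoint t X}.Finite := by
  refine (Set.Finite.pi fun _ => Set.Finite.pi fun _ => Set.finite_Icc 0 t).subset ?_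
  intro X hX
  simp only [Set.mem_pi, Set.mem_univ, true_implies, Set.mem_Icc]
  exact fun i j => ⟨hX.nonneg i j, hX.le i j⟩

lemma mem_smul_CRY_iff {t : ℕ} (ht : t ≠ 0) (X : Matrix (Fin n) (Fin n) ℤ) :
    (fun i j => (X i j : ℝ)) ∈ (t : ℝ) • CRY n ↔ IsCRYPoint t X := by
  have ht' : (t : ℝ) ≠ 0 := by exact_mod_cast ht
  change X.map ((↑) : ℤ → ℝ) ∈ (t : ℝ) • CRY n ↔ _
  rw [Set.mem_smul_set_iff_inv_smul_mem₀ ht']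
  have ht_inv : 0 < (t : ℝ)⁻¹ := by positivity
  simp only [CRY, Set.mem_ofPred_eq, Matrix.smul_apply, Matrix.map_apply, smul_eq_mul, ← mul_sum,
    mul_nonneg_iff_of_pos_left ht_inv, inv_mul_eq_one₀ ht', mul_eq_zero, inv_eq_zero, ht', false_or,
    ← Int.cast_sum, Int.cast_nonneg_iff, Int.cast_eq_zero]
  simp only [← Int.cast_natCast (R := ℝ) t, Int.cast_inj, eq_comm (a := (t : ℤ))]
  exact ⟨fun ⟨h₁, h₂, h₃, h₄⟩ => ⟨h₁, h₂, h₃, h₄⟩, fun ⟨h₁, h₂, h₃, h₄⟩ => ⟨h₁, h₂, h₃, h₄⟩⟩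

lemma mem_smul_CRYface_iff {t : ℕ} (ht : t ≠ 0) (h : 2 ≤ n) (X : Matrix (Fin n) (Fin n) ℤ) :
    (fun i j => (X i j : ℝ)) ∈ (t : ℝ) • CRYface n h ↔
      IsCRYPoint t X ∧ X ⟨1, h⟩ ⟨1, h⟩ = 0 := by
  have ht' : (t : ℝ) ≠ 0 := by exact_mod_cast ht
  change X.map ((↑) : ℤ → ℝ) ∈ (t : ℝ) • CRYface n h ↔ _
  rw [← mem_smul_CRY_iff ht]
  change _ ↔ X.map ((↑) : ℤ → ℝ) ∈ (t : ℝ) • CRY n ∧ _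
  simp only [CRYface, Set.mem_smul_set_iff_inv_smul_mem₀ ht', Set.mem_ofPred_eq,
    Matrix.smul_apply, Matrix.map_apply, smul_eq_mul, mul_eq_zero, inv_eq_zero, ht', false_or,
    Int.cast_eq_zero]

lemma IsCRYPoint.submatrix {t : ℤ} {X : Matrix (Fin n) (Fin n) ℤ} (hX : IsCRYPoint t X)
    (σ τ : Equiv.Perm (Fin n)) (h : ∀ i j : Fin n, (i : ℕ) + 2 ≤ j → X (σ i) (τ j) = 0) :
    IsCRYPoint t (X.submatrix σ τ) where
  nonneg _ _ := hX.nonneg _ _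
  row_sum i := (Equiv.sum_comp τ (X (σ i))).trans (hX.row_sum _)
  col_sum j := (Equiv.sum_comp σ (fun i => X i (τ j))).trans (hX.col_sum _)
  eq_zero := h

section Face

variable {m : ℕ} {t : ℤ} {X Y : Matrix (Fin (m + 3)) (Fin (m + 3)) ℤ}

-- `((2 : Fin (m + 3)) : ℕ)` simp-normalises to `2 % (m + 3)`.
attribute [local simp] Nat.mod_eq_of_lt

lemma IsCRYPoint.row_zero (hX : IsCRYPoint t X) : X 0 0 + X 0 1 = t := by
  rw [← hX.row_sum 0, Fin.sum_univ_succ, Fin.sum_univ_succ,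
    sum_eq_zero fun j _ => hX.eq_zero _ _ (by simp), add_zero]
  simp

lemma IsCRYPoint.row_one (hX : IsCRYPoint t X) : X 1 0 + X 1 1 + X 1 2 = t := by
  rw [← hX.row_sum 1, Fin.sum_univ_succ, Fin.sum_univ_succ, Fin.sum_univ_succ,
    sum_eq_zero fun j _ => hX.eq_zero _ _ (by simp), add_zero]
  simp [add_assoc]

lemma IsCRYPoint.add_le (hX : IsCRYPoint t X) (j : Fin (m + 3)) : X 0 j + X 1 j ≤ t := by
  rw [← hX.col_sum j, Fin.sum_univ_succ, Fin.sum_univ_succ, ← add_assoc]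
  exact le_add_of_nonneg_right (sum_nonneg fun i _ => hX.nonneg _ _)

lemma IsCRYPoint.add_smul_circuit (hX : IsCRYPoint t X) {s : ℤ} (h00 : 0 ≤ X 0 0 + s)
    (h01 : s ≤ X 0 1) (h10 : s ≤ X 1 0) (h11 : 0 ≤ X 1 1 + s) :
    IsCRYPoint t (X + s • circuit 0 1 0 1) where
  nonneg := nonneg_add_smul_circuit hX.nonneg zero_ne_one zero_ne_one h00 h01 h10 h11
  row_sum i := (sum_add_smul_circuit_row X s 0 1 0 1 i).trans (hX.row_sum i)
  col_sum j := (sum_add_smul_circuit_col X s 0 1 0 1 j).trans (hX.col_sum j)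
  eq_zero i j hij := by
    have hj0 : j ≠ 0 := by rintro rfl; simp at hij
    have hj1 : j ≠ 1 := by rintro rfl; simp at hij
    rw [Matrix.add_apply, Matrix.smul_apply, circuit_apply_of_ne_right hj0 hj1,
      hX.eq_zero i j hij, smul_zero, add_zero]

/-- Integer points of the face of `t • CRY (m + 3)` on which the 0-based entry `(1, 1)`, the
paper's `x₂₂`, vanishes. -/
abbrev FacePoint (m : ℕ) (t : ℤ) :=
  {Y : Matrix (Fin (m + 3)) (Fin (m + 3)) ℤ // IsCRYPoint t Y ∧ Y 1 1 = 0}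

@[simp] lemma add_smul_circuit_one_one (s : ℤ) :
    (X + s • circuit 0 1 0 1 : Matrix _ _ ℤ) 1 1 = X 1 1 + s := by
  rw [add_smul_circuit_apply]
  simp

@[simp] lemma add_smul_circuit_one_zero (s : ℤ) :
    (X + s • circuit 0 1 0 1 : Matrix _ _ ℤ) 1 0 = X 1 0 - s := by
  rw [add_smul_circuit_apply]
  simp [sub_eq_add_neg]

lemma IsCRYPoint.lower (hX : IsCRYPoint t X) :
    IsCRYPoint t (X + (-X 1 1) • circuit 0 1 0 1) ∧
      (X + (-X 1 1) • circuit 0 1 0 1 : Matrix _ _ ℤ) 1 1 = 0 := by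
  refine ⟨hX.add_smul_circuit ?_ ?_ ?_ (by simp),
    by rw [add_smul_circuit_one_one, add_neg_cancel]⟩
  · linarith [hX.row_zero, hX.add_le 1]
  · linarith [hX.nonneg 1 1, hX.nonneg 0 1]
  · linarith [hX.nonneg 1 1, hX.nonneg 1 0]

lemma IsCRYPoint.raise (hY : IsCRYPoint t Y) (hY₁₁ : Y 1 1 = 0) {s : ℤ}
    (hs : s ∈ Icc 0 (Y 1 0)) :
    IsCRYPoint t (Y + s • circuit 0 1 0 1) := by
  rw [mem_Icc] at hs
  refine hY.add_smul_circuit ?_ ?_ hs.2 (by linarith)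
  · linarith [hY.nonneg 0 0]
  · linarith [hY.row_zero, hY.add_le 0]

def pointEquivSigma :
    {X : Matrix (Fin (m + 3)) (Fin (m + 3)) ℤ // IsCRYPoint t X} ≃
      Σ Y : FacePoint m t, Icc 0 (Y.1 1 0) where
  toFun X := ⟨⟨_, X.2.lower⟩, X.1 1 1, by
    simp only [mem_Icc, add_smul_circuit_one_zero]
    constructor <;> linarith [X.2.nonneg 1 1, X.2.nonneg 1 0]⟩
  invFun p := ⟨_, p.1.2.1.raise p.1.2.2 p.2.2⟩
  left_inv X := by
    ext1
    simp only [add_assoc, ← add_smul, neg_add_cancel, zero_smul, add_zero]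
  right_inv := by
    rintro ⟨Y, s, hs⟩
    have hs' : (Y.1 + s • circuit 0 1 0 1 : Matrix _ _ ℤ) 1 1 = s := by
      rw [add_smul_circuit_one_one, Y.2.2, zero_add]
    refine Sigma.subtype_ext (Subtype.ext ?_) hs'
    simp only [hs', add_assoc, ← add_smul, add_neg_cancel, zero_smul, add_zero]

instance : Finite (FacePoint m t) :=
  ((finite_isCRYPoint t).subset fun _ hY => hY.1).to_subtype

noncomputable instance : Fintype (FacePoint m t) := Fintype.ofFinite _

lemma natCard_point_eq :
    (Nat.card {X : Matrix (Fin (m + 3)) (Fin (m + 3)) ℤ // IsCRYPoint t X} : ℤ) =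
      ∑ Y : FacePoint m t, Y.1 1 0 + Nat.card (FacePoint m t) := by
  rw [Nat.card_congr pointEquivSigma, Nat.card_eq_fintype_card, Fintype.card_sigma,
    Nat.card_eq_fintype_card, Fintype.card_eq_sum_ones, Nat.cast_sum, Nat.cast_sum,
    ← sum_add_distrib]
  refine sum_congr rfl fun Y _ => ?_
  rw [Fintype.card_coe, Int.card_Icc, sub_zero,
    Int.toNat_of_nonneg (by linarith [Y.2.1.nonneg 1 0]), Nat.cast_one]

lemma val_swap_zero_one_le (i : Fin (m + 3)) :
    (Equiv.swap (0 : Fin (m + 3)) 1 i : ℕ) ≤ max (i : ℕ) 1 := by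
  rcases eq_or_ne i 0 with rfl | hi0
  · simp
  rcases eq_or_ne i 1 with rfl | hi1
  · simp
  rw [Equiv.swap_apply_of_ne_of_ne hi0 hi1]
  exact le_max_left _ _

lemma eq_zero_two_or_three_le {i j : Fin (m + 3)} (hij : (i : ℕ) + 2 ≤ j) :
    i = 0 ∧ j = 2 ∨ 3 ≤ (j : ℕ) := by
  rcases Nat.lt_or_ge j 3 with hj | hj
  · left
    refine ⟨Fin.ext ?_, Fin.ext ?_⟩
    · simp only [Fin.val_zero]; omega
    · simp; omega
  · exact Or.inr hj

def faceSwap (Y : FacePoint m t) : FacePoint m t :=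
  ⟨Y.1.submatrix (Equiv.swap 0 1) (Equiv.swap 1 2), Y.2.1.submatrix _ _ fun i j hij => by
    rcases eq_zero_two_or_three_le hij with ⟨rfl, rfl⟩ | hj
    · simpa using Y.2.2
    · have hj1 : j ≠ 1 := by rintro rfl; simp at hj
      have hj2 : j ≠ 2 := by rintro rfl; simp at hj
      rw [Equiv.swap_apply_of_ne_of_ne hj1 hj2]
      exact Y.2.1.eq_zero _ _ (by have := val_swap_zero_one_le i; omega),
    by simpa using Y.2.1.eq_zero 0 2 (by simp)⟩

lemma faceSwap_involutive : Function.Involutive (faceSwap (m := m) (t := t)) := by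
  intro Y
  ext i j
  simp [faceSwap]

lemma faceSwap_one_zero (Y : FacePoint m t) : (faceSwap Y).1 1 0 = Y.1 0 0 := by
  simp [faceSwap, Equiv.swap_apply_of_ne_of_ne, Fin.ext_iff]

lemma sum_zero_zero_eq_sum_one_zero :
    ∑ Y : FacePoint m t, Y.1 0 0 = ∑ Y : FacePoint m t, Y.1 1 0 :=
  calc ∑ Y : FacePoint m t, Y.1 0 0
      = ∑ Y : FacePoint m t, (faceSwap Y).1 1 0 :=
        sum_congr rfl fun Y _ => (faceSwap_one_zero Y).symm
    _ = ∑ Y : FacePoint m t, Y.1 1 0 :=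
      Equiv.sum_comp (faceSwap_involutive.toPerm _) (fun Y => Y.1 1 0)

def shear (Y : Matrix (Fin (m + 3)) (Fin (m + 3)) ℤ) : Matrix (Fin (m + 3)) (Fin (m + 3)) ℤ :=
  Y.submatrix id (Equiv.swap 0 2) + Y 0 0 • circuit 0 1 0 2

lemma shear_zero_zero (hY : Y 0 2 = 0) : shear Y 0 0 = Y 0 0 := by
  rw [shear, add_smul_circuit_apply]
  simp [hY, Fin.ext_iff]

lemma shear_one_zero : shear Y 1 0 = Y 1 2 - Y 0 0 := by
  rw [shear, add_smul_circuit_apply]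
  simp [sub_eq_add_neg, Fin.ext_iff]

lemma shear_one_one : shear Y 1 1 = Y 1 1 := by
  rw [shear, add_smul_circuit_apply]
  simp [Fin.ext_iff, Equiv.swap_apply_def]

lemma shear_shear (hY : Y 0 2 = 0) : shear (shear Y) = Y := by
  rw [shear, shear_zero_zero hY, shear]
  ext i j
  have hC := congrFun₂ (circuit_submatrix_swap (R := ℤ) (0 : Fin (m + 3)) 1 0 2) i j
  simp only [submatrix_apply, id, Matrix.neg_apply] at hC
  simp only [Matrix.add_apply, Matrix.smul_apply, submatrix_apply, id, Equiv.swap_apply_self, hC,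
    smul_neg, neg_add_cancel_right]

lemma isCRYPoint_shear (hY : IsCRYPoint t Y) (hY₁₁ : Y 1 1 = 0) :
    IsCRYPoint t (shear Y) where
  nonneg := by
    refine nonneg_add_smul_circuit (fun i j => hY.nonneg _ _) zero_ne_one
      (by simp [Fin.ext_iff]) ?_ ?_ ?_ ?_ <;>
      simp only [id, Equiv.swap_apply_left, Equiv.swap_apply_right, le_refl]
    · linarith [hY.nonneg 0 2, hY.nonneg 0 0]
    · linarith [hY.row_one, hY.row_zero, hY.add_le 0]
    · linarith [hY.nonneg 1 0, hY.nonneg 0 0]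
  row_sum i := (sum_add_smul_circuit_row _ _ _ _ _ _ i).trans
    ((Equiv.sum_comp (Equiv.swap 0 2) (Y i)).trans (hY.row_sum i))
  col_sum j := (sum_add_smul_circuit_col _ _ _ _ _ _ j).trans (hY.col_sum _)
  eq_zero i j hij := by
    rcases eq_zero_two_or_three_le hij with ⟨rfl, rfl⟩ | hj
    · rw [shear, add_smul_circuit_apply]
      simp [Fin.ext_iff]
    · have hj0 : j ≠ 0 := by rintro rfl; simp at hj
      have hj2 : j ≠ 2 := by rintro rfl; simp at hj
      rw [shear, Matrix.add_apply, Matrix.smul_apply, circuit_apply_of_ne_right hj0 hj2,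
        submatrix_apply, id, Equiv.swap_apply_of_ne_of_ne hj0 hj2, hY.eq_zero i j hij, smul_zero,
        add_zero]

def faceShear (Y : FacePoint m t) : FacePoint m t :=
  ⟨shear Y.1, isCRYPoint_shear Y.2.1 Y.2.2, shear_one_one.trans Y.2.2⟩

lemma faceShear_involutive : Function.Involutive (faceShear (m := m) (t := t)) :=
  fun Y => Subtype.ext (shear_shear (Y.2.1.eq_zero 0 2 (by simp)))

lemma sum_one_two_sub_zero_zero_eq_sum_one_zero :
    ∑ Y : FacePoint m t, (Y.1 1 2 - Y.1 0 0) = ∑ Y : FacePoint m t, Y.1 1 0 :=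
  calc ∑ Y : FacePoint m t, (Y.1 1 2 - Y.1 0 0)
      = ∑ Y : FacePoint m t, (faceShear Y).1 1 0 :=
        sum_congr rfl fun _ _ => shear_one_zero.symm
    _ = ∑ Y : FacePoint m t, Y.1 1 0 :=
      Equiv.sum_comp (faceShear_involutive.toPerm _) (fun Y => Y.1 1 0)

lemma three_mul_natCard_point :
    3 * (Nat.card {X : Matrix (Fin (m + 3)) (Fin (m + 3)) ℤ // IsCRYPoint t X} : ℤ) =
      (t + 3) * Nat.card (FacePoint m t) := by
  have hrow : ∑ Y : FacePoint m t, (Y.1 1 0 + Y.1 1 2) = t * Nat.card (FacePoint m t) := by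
    rw [Nat.card_eq_fintype_card, Fintype.card_eq_sum_ones, Nat.cast_sum, mul_sum]
    refine sum_congr rfl fun Y _ => ?_
    rw [Nat.cast_one, mul_one]
    linarith [Y.2.1.row_one, Y.2.2]
  have hshear := sum_one_two_sub_zero_zero_eq_sum_one_zero (m := m) (t := t)
  rw [sum_add_distrib] at hrow
  rw [sum_sub_distrib] at hshear
  rw [natCard_point_eq]
  linarith [sum_zero_zero_eq_sum_one_zero (m := m) (t := t)]

end Face

lemma three_mul_latCount {m t : ℕ} (ht : t ≠ 0) (h : 2 ≤ m + 3) :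
    3 * latCount (m + 3) (CRY (m + 3)) t =
      (t + 3) * latCount (m + 3) (CRYface (m + 3) h) t := by
  have hCRY : latCount (m + 3) (CRY (m + 3)) t =
      Nat.card {X : Matrix (Fin (m + 3)) (Fin (m + 3)) ℤ // IsCRYPoint t X} :=
    Nat.card_congr (Equiv.subtypeEquivRight (mem_smul_CRY_iff ht))
  have hface : latCount (m + 3) (CRYface (m + 3) h) t = Nat.card (FacePoint m t) :=
    Nat.card_congr (Equiv.subtypeEquivRight fun X => (mem_smul_CRYface_iff ht h X).trans
      (by rw [show (⟨1, h⟩ : Fin (m + 3)) = 1 from Fin.ext (by simp)]))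
  rw [hCRY, hface]
  exact_mod_cast three_mul_natCard_point (m := m) (t := t)

end ChanRobbinsYuen

/-- Conjecture 4 of Chan–Robbins–Yuen: with `d = n(n-1)/2`, writing `L₁`
for the relative volume of the face `F = {X ∈ CRY_n : x₂₂ = 0}` and `L₂` for the relative
volume of `CRY_n` (both as Ehrhart limits), one has `binom(n,2)·L₁ = 3·L₂`. -/
theorem stmt7 (n : ℕ) (hn : 3 ≤ n) (L1 L2 : ℝ)
    (h1 : Filter.Tendsto
      (fun t : ℕ => (((n*(n-1)/2 - 1).factorial *
          latCount n (CRYface n (by omega)) t : ℕ) : ℝ) / (t : ℝ) ^ (n*(n-1)/2 - 1))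
      Filter.atTop (nhds L1))
    (h2 : Filter.Tendsto
      (fun t : ℕ => (((n*(n-1)/2).factorial * latCount n (CRY n) t : ℕ) : ℝ) /
          (t : ℝ) ^ (n*(n-1)/2))
      Filter.atTop (nhds L2)) :
    (n.choose 2 : ℝ) * L1 = 3 * L2 := by
  obtain ⟨m, rfl⟩ : ∃ m, n = m + 3 := ⟨n - 3, by omega⟩
  have hd : (m + 3) * (m + 3 - 1) / 2 ≠ 0 := by
    have : 3 * 2 ≤ (m + 3) * (m + 3 - 1) := Nat.mul_le_mul hn (by omega)
    omega
  rw [Nat.choose_two_right]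
  exact_mod_cast mul_eq_mul_of_tendsto_of_mul_eq three_ne_zero hd
    (fun t ht => ChanRobbinsYuen.three_mul_latCount ht _) h1 h2
end
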